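/- The prism graph (the Cartesian product of a triangle and an edge, i.e., two disjoint triangles u1u2u3 and v1v2v3 joined by the perfect matching u1v1, u2v2, u3v3) admits an injective 6-edge-coloring but no injective 5-edge-coloring. -/
import Mathlib


/-- `c` is an injective edge-coloring of `G`. -/
def IsInjColoring {V C : Type*} (G : SimpleGraph V) (c : Sym2 V → C) : Prop :=
  ∀ a b x y : V, G.Adj a b → G.Adj b x → G.Adj x y → a ≠ x → b ≠ y →
    c s(a, b) ≠ c s(x, y)

/-- The prism: triangles `u1 u2 u3 = 0 1 2` and `v1 v2 v3 = 3 4 5` joined by the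
perfect matching `u_i v_i`. -/
def prism : SimpleGraph (Fin 6) :=
  SimpleGraph.fromEdgeSet
    {s(0, 1), s(1, 2), s(0, 2), s(3, 4), s(4, 5), s(3, 5), s(0, 3), s(1, 4), s(2, 5)}

instance : DecidableRel prism.Adj := fun a b =>
  decidable_of_iff (s(a,b) ∈ ({s(0, 1), s(1, 2), s(0, 2), s(3, 4), s(4, 5), s(3, 5),
      s(0, 3), s(1, 4), s(2, 5)} : Finset (Sym2 (Fin 6))) ∧ a ≠ b) (by
    rw [prism, SimpleGraph.fromEdgeSet_adj]
    simp)

/-- An explicit injective 6-edge-coloring of the prism. -/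
def goodColoring : Sym2 (Fin 6) → Fin 6 := fun e =>
  if e = s(0,1) ∨ e = s(0,3) then 0
  else if e = s(1,2) ∨ e = s(1,4) then 1
  else if e = s(0,2) ∨ e = s(2,5) then 2
  else if e = s(3,4) then 3
  else if e = s(4,5) then 4
  else 5

/-- The prism admits an injective 6-edge-coloring but no injective 5-edge-coloring. -/
theorem prism_injective_index :
    (∃ c : Sym2 (Fin 6) → Fin 6, IsInjColoring prism c) ∧
    ¬ ∃ c : Sym2 (Fin 6) → Fin 5, IsInjColoring prism c := by
  constructor
  · refine ⟨goodColoring, ?_⟩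
    unfold IsInjColoring
    decide
  · rintro ⟨c, hc⟩
    -- the six triangle edges pairwise conflict
    have h12 := hc 1 0 2 1 (by decide) (by decide) (by decide) (by decide) (by decide)
    have h13 := hc 0 1 2 0 (by decide) (by decide) (by decide) (by decide) (by decide)
    have h23 := hc 2 1 0 2 (by decide) (by decide) (by decide) (by decide) (by decide)
    have h14 := hc 1 0 3 4 (by decide) (by decide) (by decide) (by decide) (by decide)
    have h15 := hc 0 1 4 5 (by decide) (by decide) (by decide) (by decide) (by decide)
    have h16 := hc 1 0 3 5 (by decide) (by decide) (by decide) (by decide) (by decide)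
    have h24 := hc 2 1 4 3 (by decide) (by decide) (by decide) (by decide) (by decide)
    have h25 := hc 1 2 5 4 (by decide) (by decide) (by decide) (by decide) (by decide)
    have h26 := hc 1 2 5 3 (by decide) (by decide) (by decide) (by decide) (by decide)
    have h34 := hc 2 0 3 4 (by decide) (by decide) (by decide) (by decide) (by decide)
    have h35 := hc 0 2 5 4 (by decide) (by decide) (by decide) (by decide) (by decide)
    have h36 := hc 2 0 3 5 (by decide) (by decide) (by decide) (by decide) (by decide)
    have h45 := hc 4 3 5 4 (by decide) (by decide) (by decide) (by decide) (by decide)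
    have h46 := hc 3 4 5 3 (by decide) (by decide) (by decide) (by decide) (by decide)
    have h56 := hc 5 4 3 5 (by decide) (by decide) (by decide) (by decide) (by decide)
    simp only [Sym2.eq_swap] at *
    set x1 := c s(0,1); set x2 := c s(1,2); set x3 := c s(0,2)
    set x4 := c s(3,4); set x5 := c s(4,5); set x6 := c s(3,5)
    have b1 := x1.isLt; have b2 := x2.isLt; have b3 := x3.isLt
    have b4 := x4.isLt; have b5 := x5.isLt; have b6 := x6.isLt
    simp only [Fin.ne_iff_vne] at h12 h13 h23 h14 h15 h16 h24 h25 h26 h34 h35 h36 h45 h46 h56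
    omega
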